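/- arXiv:0812.4482 — 2 statements merged into one kernel-verified Lean document; each statement's English description precedes it below -/
import Mathlib

section
/- For any g, h ∈ G, the map m_{g,h} sends 𝒞 ⊗ 𝒞_h into 𝒞_{gh}; explicitly, for all c′, c₁, c₂ ∈ 𝒞 the element Σᵢ ξ′ᵢ c′ g(ξ″ᵢ (c₁c₂ − c₂·h(c₁))) c_{g,h} lies in 𝒞_{gh}. Hence m_{g,h} descends to a well-defined linear map HH₀(𝒞)_g ⊗ HH₀(𝒞)_h → HH₀(𝒞)_{gh}. -/
open scoped TensorProduct

noncomputable section

variable {K : Type*} [Field K] {G : Type*} [Group G]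
  {A : Type*} [Ring A] [Algebra K A] {ι : Type*} [Fintype ι]

/-- The subspace `𝒞_h = span{c₁c₂ − c₂·h(c₁) | c₁, c₂ ∈ 𝒞}`. -/
def commSub (ρ : G → A ≃ₐ[K] A) (h : G) : Submodule K A :=
  Submodule.span K {x | ∃ c₁ c₂ : A, x = c₁ * c₂ - c₂ * ρ h c₁}

/-- The map `T_h(g)(c) = c_e⁻¹ c_{g,g⁻¹}⁻¹ g(c) c_{g,h} c_{gh,g⁻¹}`. -/
def Tmap (ρ : G → A ≃ₐ[K] A) (u : G → G → Aˣ) (ue : Aˣ) (g h : G) (x : A) : A :=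
  (↑(ue⁻¹) : A) * (↑((u g g⁻¹)⁻¹) : A) * ρ g x * (↑(u g h) : A) * (↑(u (g * h) g⁻¹) : A)

/-- The twisted multiplication `m_{g,h}(c′⊗c″) = Σᵢ ξ′ᵢ c′ g(ξ″ᵢ c″) c_{g,h}`. -/
def mMul (ρ : G → A ≃ₐ[K] A) (u : G → G → Aˣ) (ξ₁ ξ₂ : ι → A) (g h : G)
    (c' c'' : A) : A :=
  ∑ i, ξ₁ i * c' * ρ g (ξ₂ i * c'') * (↑(u g h) : A)

/-- The twisted comultiplication `Δ_{g,h}(c) = Σᵢ c c_{g,h}⁻¹ g(ξ′ᵢ) ⊗ ξ″ᵢ`. -/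
def ΔCom (ρ : G → A ≃ₐ[K] A) (u : G → G → Aˣ) (ξ₁ ξ₂ : ι → A) (g h : G)
    (c : A) : A ⊗[K] A :=
  ∑ i, (c * (↑((u g h)⁻¹) : A) * ρ g (ξ₁ i)) ⊗ₜ[K] ξ₂ i

/-- The subspace `𝒞_g ⊗ 𝒞` of `𝒞 ⊗ 𝒞`. -/
def leftTensor (ρ : G → A ≃ₐ[K] A) (g : G) : Submodule K (A ⊗[K] A) :=
  Submodule.span K {z | ∃ x ∈ commSub ρ g, ∃ y : A, z = x ⊗ₜ[K] y}

/-- The subspace `𝒞 ⊗ 𝒞_h` of `𝒞 ⊗ 𝒞`. -/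
def rightTensor (ρ : G → A ≃ₐ[K] A) (h : G) : Submodule K (A ⊗[K] A) :=
  Submodule.span K {z | ∃ x : A, ∃ y ∈ commSub ρ h, z = x ⊗ₜ[K] y}

/-!
The Casimir element `ξ = ∑ᵢ ξ′ᵢ ⊗ ξ″ᵢ` of a symmetric Frobenius algebra satisfies
`(a ⊗ 1) ξ = ξ (1 ⊗ a)`, so `m_{g,h}(c′ ⊗ c₁c₂) = c₁ · m_{g,h}(c′ ⊗ c₂)`, while
`g ∘ h = Ad(c_{g,h}) ∘ gh` gives `m_{g,h}(c′ ⊗ c₂·h(c₁)) = m_{g,h}(c′ ⊗ c₂) · gh(c₁)`.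
Hence `m_{g,h}(c′ ⊗ (c₁c₂ − c₂·h(c₁)))` is the generator `c₁X − X·gh(c₁)` of `𝒞_{gh}`,
where `X = m_{g,h}(c′ ⊗ c₂)`.
-/

section Casimir

variable {K A ι : Type*} [CommSemiring K] [Semiring A] [Algebra K A] [Fintype ι]
  (θ : A →ₗ[K] K) {ξ₁ ξ₂ : ι → A}

theorem eq_sum_trace_mul_smul_of_symm (hξ : ∀ a : A, a = ∑ i, θ (a * ξ₂ i) • ξ₁ i)
    (hξsym : (∑ i, ξ₁ i ⊗ₜ[K] ξ₂ i) = ∑ i, ξ₂ i ⊗ₜ[K] ξ₁ i) (a : A) :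
    a = ∑ i, θ (a * ξ₁ i) • ξ₂ i := by
  have := congrArg (TensorProduct.lift ((LinearMap.lsmul K A).flip.compl₂
    (θ ∘ₗ LinearMap.mulLeft K a))) hξsym
  simp only [map_sum, TensorProduct.lift.tmul, LinearMap.compl₂_apply, LinearMap.comp_apply,
    LinearMap.mulLeft_apply, LinearMap.flip_apply, LinearMap.lsmul_apply] at this
  rwa [← hξ a] at this

theorem sum_mul_tmul_eq_sum_tmul_mul (htr : ∀ a b : A, θ (a * b) = θ (b * a))
    (hξ : ∀ a : A, a = ∑ i, θ (a * ξ₂ i) • ξ₁ i)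
    (hξsym : (∑ i, ξ₁ i ⊗ₜ[K] ξ₂ i) = ∑ i, ξ₂ i ⊗ₜ[K] ξ₁ i) (a : A) :
    ∑ i, (a * ξ₁ i) ⊗ₜ[K] ξ₂ i = ∑ i, ξ₁ i ⊗ₜ[K] (ξ₂ i * a) :=
  calc ∑ i, (a * ξ₁ i) ⊗ₜ[K] ξ₂ i
      = ∑ i, ∑ j, θ (a * ξ₁ i * ξ₂ j) • (ξ₁ j ⊗ₜ[K] ξ₂ i) := by
        refine Finset.sum_congr rfl fun i _ => ?_
        conv_lhs => rw [hξ (a * ξ₁ i), TensorProduct.sum_tmul]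
        simp only [TensorProduct.smul_tmul']
    _ = ∑ j, ∑ i, θ (ξ₂ j * a * ξ₁ i) • (ξ₁ j ⊗ₜ[K] ξ₂ i) := by
        rw [Finset.sum_comm]
        refine Finset.sum_congr rfl fun j _ => Finset.sum_congr rfl fun i _ => ?_
        rw [htr, mul_assoc]
    _ = ∑ j, ξ₁ j ⊗ₜ[K] (ξ₂ j * a) := by
        refine Finset.sum_congr rfl fun j _ => ?_
        simp_rw [← TensorProduct.tmul_smul, ← TensorProduct.tmul_sum]
        rw [← eq_sum_trace_mul_smul_of_symm θ hξ hξsym]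

end Casimir

section TwistedMul

variable {G : Type*} (ρ : G → A ≃ₐ[K] A) (u : G → G → Aˣ) (ξ₁ ξ₂ : ι → A) (g h : G) (c' : A)

theorem mMul_mul_left (θ : A →ₗ[K] K) (htr : ∀ a b : A, θ (a * b) = θ (b * a))
    (hξ : ∀ a : A, a = ∑ i, θ (a * ξ₂ i) • ξ₁ i)
    (hξsym : (∑ i, ξ₁ i ⊗ₜ[K] ξ₂ i) = ∑ i, ξ₂ i ⊗ₜ[K] ξ₁ i) (a b : A) :
    mMul ρ u ξ₁ ξ₂ g h c' (a * b) = a * mMul ρ u ξ₁ ξ₂ g h c' b := by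
  let φ : A →ₗ[K] A := LinearMap.mulLeft K c' ∘ₗ LinearMap.mulRight K (u g h : A) ∘ₗ
    (ρ g).toLinearMap ∘ₗ LinearMap.mulRight K b
  have := congrArg (TensorProduct.lift ((LinearMap.mul K A).compl₂ φ))
    (sum_mul_tmul_eq_sum_tmul_mul θ htr hξ hξsym a)
  simp only [map_sum, TensorProduct.lift.tmul, LinearMap.compl₂_apply, φ, LinearMap.comp_apply,
    LinearMap.mulLeft_apply, LinearMap.mulRight_apply, LinearMap.mul_apply',
    AlgEquiv.toLinearMap_apply] at this
  simp only [mMul, Finset.mul_sum]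
  simpa only [mul_assoc] using this.symm

theorem mMul_mul_map_right [Mul G]
    (hAd : ∀ x : A, ρ g (ρ h x) = (↑(u g h) : A) * ρ (g * h) x * (↑((u g h)⁻¹) : A)) (a b : A) :
    mMul ρ u ξ₁ ξ₂ g h c' (b * ρ h a) = mMul ρ u ξ₁ ξ₂ g h c' b * ρ (g * h) a := by
  simp only [mMul, Finset.sum_mul, ← mul_assoc, map_mul, hAd]
  simp only [mul_assoc, Units.inv_mul, mul_one]

end TwistedMul

theorem mMul_right_commSub_general
    (ρ : G → A ≃ₐ[K] A) (u : G → G → Aˣ)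
    (hAd : ∀ (g h : G) (x : A),
      ρ g (ρ h x) = (↑(u g h) : A) * ρ (g * h) x * (↑((u g h)⁻¹) : A))
    (θ : A →ₗ[K] K)
    (htr : ∀ a b : A, θ (a * b) = θ (b * a))
    (ξ₁ ξ₂ : ι → A)
    (hξ : ∀ a : A, a = ∑ i, θ (a * ξ₂ i) • ξ₁ i)
    (hξsym : (∑ i, ξ₁ i ⊗ₜ[K] ξ₂ i) = ∑ i, ξ₂ i ⊗ₜ[K] ξ₁ i)
    (g h : G) (c' c₁ c₂ : A) :
    ∑ i, ξ₁ i * c' * ρ g (ξ₂ i * (c₁ * c₂ - c₂ * ρ h c₁)) * (↑(u g h) : A) ∈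
      commSub ρ (g * h) := by
  have hsplit : ∑ i, ξ₁ i * c' * ρ g (ξ₂ i * (c₁ * c₂ - c₂ * ρ h c₁)) * (↑(u g h) : A) =
      mMul ρ u ξ₁ ξ₂ g h c' (c₁ * c₂) - mMul ρ u ξ₁ ξ₂ g h c' (c₂ * ρ h c₁) := by
    simp only [mMul, mul_sub, map_sub, sub_mul, Finset.sum_sub_distrib]
  rw [hsplit, mMul_mul_left ρ u ξ₁ ξ₂ g h c' θ htr hξ hξsym,
    mMul_mul_map_right ρ u ξ₁ ξ₂ g h c' (hAd g h)]
  exact Submodule.subset_span ⟨c₁, _, rfl⟩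

theorem mMul_right_commSub
    [Fintype G] (ρ : G → A ≃ₐ[K] A) (u : G → G → Aˣ) (ue : Aˣ)
    (hAd : ∀ (g h : G) (x : A),
      ρ g (ρ h x) = (↑(u g h) : A) * ρ (g * h) x * (↑((u g h)⁻¹) : A))
    (hAde : ∀ x : A, ρ (1 : G) x = (↑ue : A) * x * (↑(ue⁻¹) : A))
    (hcoc : ∀ g h k : G,
      (↑(u g h) : A) * (↑(u (g * h) k) : A) = ρ g (↑(u h k) : A) * (↑(u g (h * k)) : A))
    (hue1 : ∀ g : G, (↑(u g 1) : A) = ρ g (↑ue : A))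
    (hue2 : ∀ g : G, (↑(u 1 g) : A) = (↑ue : A))
    [FiniteDimensional K A] (θ : A →ₗ[K] K)
    (htr : ∀ a b : A, θ (a * b) = θ (b * a))
    (hnd : ∀ a : A, (∀ b : A, θ (a * b) = 0) → a = 0)
    (hGinv : ∀ (g : G) (a : A), θ (ρ g a) = θ a)
    (ξ₁ ξ₂ : ι → A)
    (hξ : ∀ a : A, a = ∑ i, θ (a * ξ₂ i) • ξ₁ i)
    (hξsym : (∑ i, ξ₁ i ⊗ₜ[K] ξ₂ i) = ∑ i, ξ₂ i ⊗ₜ[K] ξ₁ i)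
    (g h : G) (c' c₁ c₂ : A) :
    ∑ i, ξ₁ i * c' * ρ g (ξ₂ i * (c₁ * c₂ - c₂ * ρ h c₁)) * (↑(u g h) : A) ∈
      commSub ρ (g * h) :=
  mMul_right_commSub_general ρ u hAd θ htr ξ₁ ξ₂ hξ hξsym g h c' c₁ c₂
end
end

section
/- For any g, h ∈ G, the map Δ_{g,h} sends 𝒞_{gh} into 𝒞_g ⊗ 𝒞 + 𝒞 ⊗ 𝒞_h; explicitly, for all c₁, c₂ ∈ 𝒞 the element Σᵢ (c₁c₂ − c₂·(gh)(c₁)) c_{g,h}⁻¹ g(ξ′ᵢ) ⊗ ξ″ᵢ lies in 𝒞_g ⊗ 𝒞 + 𝒞 ⊗ 𝒞_h. Hence Δ_{g,h} descends to a well-defined linear map HH₀(𝒞)_{gh} → HH₀(𝒞)_g ⊗ HH₀(𝒞)_h. -/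
open scoped TensorProduct

noncomputable section

variable {K : Type*} [Field K] {G : Type*} [Group G]
  {A : Type*} [Ring A] [Algebra K A] {ι : Type*} [Fintype ι]

/-!
With `xᵢ = c₂ c_{g,h}⁻¹ g(ξ′ᵢ)` one has
`Δ_{g,h}(c₁c₂ − c₂ (gh)(c₁)) = Σᵢ (c₁ xᵢ − xᵢ g(c₁)) ⊗ ξ″ᵢ + Σᵢ xᵢ ⊗ (c₁ ξ″ᵢ − ξ″ᵢ h(c₁))`,
and the two sums lie in `𝒞_g ⊗ 𝒞` and `𝒞 ⊗ 𝒞_h`. The identity holds because the Casimir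
element of a symmetric trace form is central in the two senses `a ξ′ ⊗ ξ″ = ξ′ ⊗ ξ″ a` and
`ξ′ a ⊗ ξ″ = ξ′ ⊗ a ξ″`. After `c_{g,h}⁻¹ g(h(c₁)) = (gh)(c₁) c_{g,h}⁻¹` has turned the second
term of the left side into `Σᵢ c₂ c_{g,h}⁻¹ g(h(c₁) ξ′ᵢ) ⊗ ξ″ᵢ`, the first identity moves `h(c₁)`
across the tensor sign; the second one moves `g(c₁)`, which produces the cross terms that cancel.
-/

open TensorProduct

section Casimir

variable {R B : Type*} [CommSemiring R] [Semiring B] [Algebra R B] {θ : B →ₗ[R] R}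
  {ξ₁ ξ₂ : ι → B}

theorem eq_sum_smul_of_tmul_symm (hξ : ∀ a : B, a = ∑ i, θ (a * ξ₂ i) • ξ₁ i)
    (hξsym : ∑ i, ξ₁ i ⊗ₜ[R] ξ₂ i = ∑ i, ξ₂ i ⊗ₜ[R] ξ₁ i) (a : B) :
    a = ∑ i, θ (a * ξ₁ i) • ξ₂ i := by
  have h := congrArg (lift ((LinearMap.lsmul R B).comp (θ.comp (LinearMap.mulLeft R a)))) hξsym
  simp only [map_sum, lift.tmul, LinearMap.comp_apply, LinearMap.lsmul_apply,
    LinearMap.mulLeft_apply] at h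
  rw [h, ← hξ a]

variable (htr : ∀ a b : B, θ (a * b) = θ (b * a))
  (hξ : ∀ a : B, a = ∑ i, θ (a * ξ₂ i) • ξ₁ i)
  (hξsym : ∑ i, ξ₁ i ⊗ₜ[R] ξ₂ i = ∑ i, ξ₂ i ⊗ₜ[R] ξ₁ i)
include htr hξ hξsym

theorem sum_mul_tmul_eq_sum_tmul_mul_s6 (a : B) :
    ∑ i, (a * ξ₁ i) ⊗ₜ[R] ξ₂ i = ∑ i, ξ₁ i ⊗ₜ[R] (ξ₂ i * a) := by
  calc ∑ i, (a * ξ₁ i) ⊗ₜ[R] ξ₂ i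
      = ∑ i, ∑ j, θ (a * ξ₁ i * ξ₂ j) • (ξ₁ j ⊗ₜ[R] ξ₂ i) := by
        refine Finset.sum_congr rfl fun i _ => ?_
        conv_lhs => rw [hξ (a * ξ₁ i), sum_tmul]
        simp only [smul_tmul']
    _ = ∑ j, ∑ i, θ (ξ₂ j * a * ξ₁ i) • (ξ₁ j ⊗ₜ[R] ξ₂ i) := by
        rw [Finset.sum_comm]
        refine Finset.sum_congr rfl fun j _ => Finset.sum_congr rfl fun i _ => ?_
        rw [htr, mul_assoc]
    _ = ∑ j, ξ₁ j ⊗ₜ[R] (ξ₂ j * a) := by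
        refine Finset.sum_congr rfl fun j _ => ?_
        conv_rhs => rw [eq_sum_smul_of_tmul_symm hξ hξsym (ξ₂ j * a), tmul_sum]
        simp only [tmul_smul]

theorem sum_tmul_mul_eq_sum_mul_tmul (a : B) :
    ∑ i, (ξ₁ i * a) ⊗ₜ[R] ξ₂ i = ∑ i, ξ₁ i ⊗ₜ[R] (a * ξ₂ i) := by
  -- the flip of the first identity, read through the symmetry of `ξ` on both sides
  have h := congrArg (TensorProduct.comm R B B) (sum_mul_tmul_eq_sum_tmul_mul_s6 htr hξ hξsym a)
  simp only [map_sum, comm_tmul] at h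
  calc ∑ i, (ξ₁ i * a) ⊗ₜ[R] ξ₂ i
      = (LinearMap.mulRight R a).rTensor B (∑ i, ξ₂ i ⊗ₜ[R] ξ₁ i) := by
        simp only [← hξsym, map_sum, LinearMap.rTensor_tmul, LinearMap.mulRight_apply]
    _ = (LinearMap.mulLeft R a).lTensor B (∑ i, ξ₂ i ⊗ₜ[R] ξ₁ i) := by
        simp only [map_sum, LinearMap.rTensor_tmul, LinearMap.lTensor_tmul,
          LinearMap.mulRight_apply, LinearMap.mulLeft_apply, h]
    _ = ∑ i, ξ₁ i ⊗ₜ[R] (a * ξ₂ i) := by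
        simp only [← hξsym, map_sum, LinearMap.lTensor_tmul, LinearMap.mulLeft_apply]

end Casimir

section Decomposition

variable {ρ : G → A ≃ₐ[K] A} {θ : A →ₗ[K] K} {ξ₁ ξ₂ : ι → A}

theorem ΔCom_commutator_eq (u : G → G → Aˣ) {g h : G}
    (hAd : ∀ x : A, ρ g (ρ h x) = (↑(u g h) : A) * ρ (g * h) x * (↑((u g h)⁻¹) : A))
    (htr : ∀ a b : A, θ (a * b) = θ (b * a))
    (hξ : ∀ a : A, a = ∑ i, θ (a * ξ₂ i) • ξ₁ i)
    (hξsym : ∑ i, ξ₁ i ⊗ₜ[K] ξ₂ i = ∑ i, ξ₂ i ⊗ₜ[K] ξ₁ i) (c₁ c₂ : A) :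
    let x i := c₂ * (↑((u g h)⁻¹) : A) * ρ g (ξ₁ i)
    ΔCom ρ u ξ₁ ξ₂ g h (c₁ * c₂ - c₂ * ρ (g * h) c₁) =
      ∑ i, (c₁ * x i - x i * ρ g c₁) ⊗ₜ[K] ξ₂ i +
        ∑ i, x i ⊗ₜ[K] (c₁ * ξ₂ i - ξ₂ i * ρ h c₁) := by
  intro x
  let F : A →ₗ[K] A := LinearMap.mulLeft K (c₂ * (↑((u g h)⁻¹) : A)) ∘ₗ (ρ g).toLinearMap
  have hconj (y : A) : (↑((u g h)⁻¹) : A) * (ρ g (ρ h c₁) * y)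
      = ρ (g * h) c₁ * ((↑((u g h)⁻¹) : A) * y) := by
    rw [hAd, ← mul_assoc, ← mul_assoc, ← mul_assoc, Units.inv_mul, one_mul, mul_assoc]
  have hleft : ∑ i, (x i * ρ g c₁) ⊗ₜ[K] ξ₂ i = ∑ i, x i ⊗ₜ[K] (c₁ * ξ₂ i) := by
    simpa [F, x, mul_assoc] using
      congrArg (F.rTensor A) (sum_tmul_mul_eq_sum_mul_tmul htr hξ hξsym c₁)
  have hright : ∑ i, (c₂ * ρ (g * h) c₁ * (↑((u g h)⁻¹) : A) * ρ g (ξ₁ i)) ⊗ₜ[K] ξ₂ i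
      = ∑ i, x i ⊗ₜ[K] (ξ₂ i * ρ h c₁) := by
    simpa [F, x, mul_assoc, hconj] using
      congrArg (F.rTensor A) (sum_mul_tmul_eq_sum_tmul_mul_s6 htr hξ hξsym (ρ h c₁))
  simp only [ΔCom, x, sub_mul, sub_tmul, tmul_sub, Finset.sum_sub_distrib, ← mul_assoc]
    at hleft hright ⊢
  rw [hleft, hright]
  abel

end Decomposition

section Membership

omit [Group G]

variable {ρ : G → A ≃ₐ[K] A}

theorem mul_sub_mul_mem_commSub (h : G) (c₁ c₂ : A) : c₁ * c₂ - c₂ * ρ h c₁ ∈ commSub ρ h :=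
  Submodule.subset_span ⟨c₁, c₂, rfl⟩

theorem sum_tmul_mem_leftTensor {g : G} {x : ι → A} (hx : ∀ i, x i ∈ commSub ρ g) (y : ι → A) :
    ∑ i, x i ⊗ₜ[K] y i ∈ leftTensor ρ g :=
  Submodule.sum_mem _ fun i _ => Submodule.subset_span ⟨x i, hx i, y i, rfl⟩

theorem sum_tmul_mem_rightTensor {h : G} (x : ι → A) {y : ι → A} (hy : ∀ i, y i ∈ commSub ρ h) :
    ∑ i, x i ⊗ₜ[K] y i ∈ rightTensor ρ h :=
  Submodule.sum_mem _ fun i _ => Submodule.subset_span ⟨x i, y i, hy i, rfl⟩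

end Membership

theorem ΔCom_maps_commSub_general
    (ρ : G → A ≃ₐ[K] A) (u : G → G → Aˣ)
    (hAd : ∀ (g h : G) (x : A),
      ρ g (ρ h x) = (↑(u g h) : A) * ρ (g * h) x * (↑((u g h)⁻¹) : A))
    (θ : A →ₗ[K] K)
    (htr : ∀ a b : A, θ (a * b) = θ (b * a))
    (ξ₁ ξ₂ : ι → A)
    (hξ : ∀ a : A, a = ∑ i, θ (a * ξ₂ i) • ξ₁ i)
    (hξsym : (∑ i, ξ₁ i ⊗ₜ[K] ξ₂ i) = ∑ i, ξ₂ i ⊗ₜ[K] ξ₁ i)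
    (g h : G) (c₁ c₂ : A) :
    ΔCom ρ u ξ₁ ξ₂ g h (c₁ * c₂ - c₂ * ρ (g * h) c₁) ∈
      leftTensor ρ g ⊔ rightTensor ρ h := by
  rw [ΔCom_commutator_eq u (hAd g h) htr hξ hξsym]
  exact Submodule.add_mem_sup
    (sum_tmul_mem_leftTensor (fun _ => mul_sub_mul_mem_commSub g _ _) ξ₂)
    (sum_tmul_mem_rightTensor _ fun i => mul_sub_mul_mem_commSub h c₁ (ξ₂ i))

theorem ΔCom_maps_commSub
    [Fintype G] (ρ : G → A ≃ₐ[K] A) (u : G → G → Aˣ) (ue : Aˣ)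
    (hAd : ∀ (g h : G) (x : A),
      ρ g (ρ h x) = (↑(u g h) : A) * ρ (g * h) x * (↑((u g h)⁻¹) : A))
    (hAde : ∀ x : A, ρ (1 : G) x = (↑ue : A) * x * (↑(ue⁻¹) : A))
    (hcoc : ∀ g h k : G,
      (↑(u g h) : A) * (↑(u (g * h) k) : A) = ρ g (↑(u h k) : A) * (↑(u g (h * k)) : A))
    (hue1 : ∀ g : G, (↑(u g 1) : A) = ρ g (↑ue : A))
    (hue2 : ∀ g : G, (↑(u 1 g) : A) = (↑ue : A))
    [FiniteDimensional K A] (θ : A →ₗ[K] K)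
    (htr : ∀ a b : A, θ (a * b) = θ (b * a))
    (hnd : ∀ a : A, (∀ b : A, θ (a * b) = 0) → a = 0)
    (hGinv : ∀ (g : G) (a : A), θ (ρ g a) = θ a)
    (ξ₁ ξ₂ : ι → A)
    (hξ : ∀ a : A, a = ∑ i, θ (a * ξ₂ i) • ξ₁ i)
    (hξsym : (∑ i, ξ₁ i ⊗ₜ[K] ξ₂ i) = ∑ i, ξ₂ i ⊗ₜ[K] ξ₁ i)
    (g h : G) (c₁ c₂ : A) :
    ΔCom ρ u ξ₁ ξ₂ g h (c₁ * c₂ - c₂ * ρ (g * h) c₁) ∈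
      leftTensor ρ g ⊔ rightTensor ρ h :=
  ΔCom_maps_commSub_general ρ u hAd θ htr ξ₁ ξ₂ hξ hξsym g h c₁ c₂
end
end
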